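/- Let f be twice continuously differentiable on [x₀, x₁] with h = x₁ - x₀, and let p be the linear interpolant of f at x₀ and x₁. Then ‖f - p‖_{L²([x₀,x₁])} ≤ (1/√120)·M·h^{5/2}, where M = max_{η ∈ [x₀,x₁]} |f''(η)|. -/

import Mathlib

/-!
The error `e = f - p` vanishes at both nodes and `e'' = f''`, so with `|f''| ≤ M` the functions
`ψ ± e`, where `ψ x = M/2 (x - x₀)(x₁ - x)`, are concave and vanish at the nodes, hence are
nonnegative: `|e| ≤ ψ` pointwise. Squaring and integrating, `∫ ψ² = M² h⁵ / 120`.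
-/

open MeasureTheory Set intervalIntegral

section SecondDerivative

variable {a b : ℝ} {g g' g'' : ℝ → ℝ}

lemma nonneg_of_hasDerivAt2_nonpos (hg : ContinuousOn g (Icc a b))
    (hg' : ∀ x ∈ Ioo a b, HasDerivAt g (g' x) x) (hg'' : ∀ x ∈ Ioo a b, HasDerivAt g' (g'' x) x)
    (hg''₀ : ∀ x ∈ Ioo a b, g'' x ≤ 0) (ha : 0 ≤ g a) (hb : 0 ≤ g b) :
    ∀ x ∈ Icc a b, 0 ≤ g x := by
  intro x hx
  have hconc : ConcaveOn ℝ (Icc a b) g :=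
    concaveOn_of_hasDerivWithinAt2_nonpos (convex_Icc a b) hg
      (by simpa only [interior_Icc] using fun x hx => (hg' x hx).hasDerivWithinAt)
      (by simpa only [interior_Icc] using fun x hx => (hg'' x hx).hasDerivWithinAt)
      (by simpa only [interior_Icc] using hg''₀)
  have hab : a ≤ b := hx.1.trans hx.2
  exact (le_min ha hb).trans
    (hconc.min_le_of_mem_Icc (left_mem_Icc.2 hab) (right_mem_Icc.2 hab) hx)

lemma abs_le_of_hasDerivAt2_of_abs_le {M : ℝ} (hg : ContinuousOn g (Icc a b))
    (hg' : ∀ x ∈ Ioo a b, HasDerivAt g (g' x) x) (hg'' : ∀ x ∈ Ioo a b, HasDerivAt g' (g'' x) x)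
    (hM : ∀ x ∈ Ioo a b, |g'' x| ≤ M) (ha : g a = 0) (hb : g b = 0) :
    ∀ x ∈ Icc a b, |g x| ≤ M / 2 * ((x - a) * (b - x)) := by
  set ψ : ℝ → ℝ := fun x => M / 2 * ((x - a) * (b - x))
  have hψ' : ∀ x, HasDerivAt ψ (M / 2 * (a + b - 2 * x)) x := fun x =>
    ((((hasDerivAt_id' x).sub_const a).mul ((hasDerivAt_id' x).const_sub b)).const_mul
      (M / 2)).congr_deriv (by ring)
  have hψ'' : ∀ x, HasDerivAt (fun x => M / 2 * (a + b - 2 * x)) (-M) x := fun x =>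
    ((((hasDerivAt_id' x).const_mul 2).const_sub (a + b)).const_mul (M / 2)).congr_deriv
      (by ring)
  have hψc : ContinuousOn ψ (Icc a b) := by fun_prop
  have upper := nonneg_of_hasDerivAt2_nonpos (hψc.sub hg)
    (fun x hx => (hψ' x).sub (hg' x hx)) (fun x hx => (hψ'' x).sub (hg'' x hx))
    (fun x hx => by linarith [neg_abs_le (g'' x), hM x hx])
    (by simp [ψ, ha]) (by simp [ψ, hb])
  have lower := nonneg_of_hasDerivAt2_nonpos (hψc.add hg)
    (fun x hx => (hψ' x).add (hg' x hx)) (fun x hx => (hψ'' x).add (hg'' x hx))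
    (fun x hx => by linarith [le_abs_self (g'' x), hM x hx])
    (by simp [ψ, ha]) (by simp [ψ, hb])
  intro x hx
  have hu : 0 ≤ ψ x - g x := upper x hx
  have hl : 0 ≤ ψ x + g x := lower x hx
  show |g x| ≤ ψ x
  exact abs_le.2 ⟨by linarith, by linarith⟩

end SecondDerivative

section LinearInterpolant

variable {f : ℝ → ℝ} {x₀ x₁ : ℝ}

noncomputable def linearInterpolant (f : ℝ → ℝ) (x₀ x₁ x : ℝ) : ℝ :=
  f x₀ * ((x₁ - x) / (x₁ - x₀)) + f x₁ * ((x - x₀) / (x₁ - x₀))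

lemma linearInterpolant_left (h : x₀ ≠ x₁) : linearInterpolant f x₀ x₁ x₀ = f x₀ := by
  simp [linearInterpolant, div_self (sub_ne_zero.2 h.symm)]

lemma linearInterpolant_right (h : x₀ ≠ x₁) : linearInterpolant f x₀ x₁ x₁ = f x₁ := by
  simp [linearInterpolant, div_self (sub_ne_zero.2 h.symm)]

lemma hasDerivAt_linearInterpolant (x : ℝ) :
    HasDerivAt (linearInterpolant f x₀ x₁) ((f x₁ - f x₀) / (x₁ - x₀)) x := by
  refine (((((hasDerivAt_id' x).const_sub x₁).div_const (x₁ - x₀)).const_mul (f x₀)).add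
    ((((hasDerivAt_id' x).sub_const x₀).div_const (x₁ - x₀)).const_mul (f x₁))).congr_deriv ?_
  ring

lemma continuous_linearInterpolant : Continuous (linearInterpolant f x₀ x₁) :=
  continuous_iff_continuousAt.2 fun x => (hasDerivAt_linearInterpolant x).continuousAt

lemma abs_sub_linearInterpolant_le {f' f'' : ℝ → ℝ} {M : ℝ} (hx : x₀ ≠ x₁)
    (hf' : ∀ x ∈ Icc x₀ x₁, HasDerivWithinAt f (f' x) (Icc x₀ x₁) x)
    (hf'' : ∀ x ∈ Icc x₀ x₁, HasDerivWithinAt f' (f'' x) (Icc x₀ x₁) x)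
    (hM : ∀ x ∈ Icc x₀ x₁, |f'' x| ≤ M) :
    ∀ x ∈ Icc x₀ x₁, |f x - linearInterpolant f x₀ x₁ x| ≤ M / 2 * ((x - x₀) * (x₁ - x)) := by
  have hderiv {φ φ' : ℝ → ℝ} (hφ : ∀ x ∈ Icc x₀ x₁, HasDerivWithinAt φ (φ' x) (Icc x₀ x₁) x)
      (x : ℝ) (hx : x ∈ Ioo x₀ x₁) : HasDerivAt φ (φ' x) x :=
    (hφ x (Ioo_subset_Icc_self hx)).hasDerivAt (Icc_mem_nhds hx.1 hx.2)
  refine abs_le_of_hasDerivAt2_of_abs_le (g'' := f'')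
    ((HasDerivWithinAt.continuousOn hf').sub continuous_linearInterpolant.continuousOn)
    (fun x hx => (hderiv hf' x hx).sub (hasDerivAt_linearInterpolant x))
    (fun x hx => (hderiv hf'' x hx).sub_const _)
    (fun x hx => hM x (Ioo_subset_Icc_self hx)) ?_ ?_
  · simp [linearInterpolant_left hx]
  · simp [linearInterpolant_right hx]

end LinearInterpolant

lemma integral_sq_le_integral_sq_of_abs_le {a b : ℝ} {e k : ℝ → ℝ} (hab : a ≤ b)
    (he : ContinuousOn e (Icc a b)) (hk : ContinuousOn k (Icc a b))
    (h : ∀ x ∈ Icc a b, |e x| ≤ k x) :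
    ∫ x in a..b, e x ^ 2 ≤ ∫ x in a..b, k x ^ 2 := by
  rw [← uIcc_of_le hab] at he hk
  exact integral_mono_on hab (he.pow 2).intervalIntegrable (hk.pow 2).intervalIntegrable
    fun x hx => sq_le_sq.2 ((h x hx).trans (le_abs_self _))

lemma integral_sq_mul_sub_mul_sub (a b : ℝ) :
    ∫ x in a..b, ((x - a) * (b - x)) ^ 2 = (b - a) ^ 5 / 30 := by
  have hF : ∀ x ∈ uIcc a b, HasDerivAt
      (fun x => (x - a) ^ 5 / 5 - (b - a) * (x - a) ^ 4 / 2 + (b - a) ^ 2 * (x - a) ^ 3 / 3)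
      (((x - a) * (b - x)) ^ 2) x := fun x _ => by
    have hx := (hasDerivAt_id' x).sub_const a
    refine ((((hx.pow 5).div_const 5).sub (((hx.pow 4).const_mul (b - a)).div_const 2)).add
      (((hx.pow 3).const_mul ((b - a) ^ 2)).div_const 3)).congr_deriv ?_
    push_cast
    ring
  rw [integral_eq_sub_of_hasDerivAt hF ((by fun_prop : Continuous _).intervalIntegrable _ _)]
  ring

lemma sqrt_sq_mul_pow_five_div_120 {M h : ℝ} (hM : 0 ≤ M) (hh : 0 ≤ h) :
    √(M ^ 2 * h ^ 5 / 120) = 1 / √120 * M * h ^ ((5 : ℝ) / 2) := by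
  have hpow : (h ^ ((5 : ℝ) / 2)) ^ 2 = h ^ 5 := by
    rw [← Real.rpow_natCast (h ^ ((5 : ℝ) / 2)) 2, ← Real.rpow_mul hh]
    norm_num
  rw [← Real.sqrt_sq (by positivity : 0 ≤ 1 / √120 * M * h ^ ((5 : ℝ) / 2)), mul_pow, mul_pow,
    hpow, div_pow, one_pow, Real.sq_sqrt (by norm_num)]
  ring_nf

theorem linear_interpolant_error_bound_general
    (f f' f'' : ℝ → ℝ) (x₀ x₁ : ℝ) (hx : x₀ < x₁)
    (hf' : ∀ x ∈ Set.Icc x₀ x₁, HasDerivWithinAt f (f' x) (Set.Icc x₀ x₁) x)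
    (hf'' : ∀ x ∈ Set.Icc x₀ x₁, HasDerivWithinAt f' (f'' x) (Set.Icc x₀ x₁) x)
    (M : ℝ) (hM : IsGreatest ((fun x => |f'' x|) '' Set.Icc x₀ x₁) M) :
    Real.sqrt (∫ x in x₀..x₁,
        (f x - (f x₀ * ((x₁ - x) / (x₁ - x₀)) + f x₁ * ((x - x₀) / (x₁ - x₀))))^2)
      ≤ (1 / Real.sqrt 120) * M * (x₁ - x₀) ^ ((5 : ℝ) / 2) := by
  have hM₀ : 0 ≤ M := by
    obtain ⟨y, -, rfl⟩ := hM.1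
    exact abs_nonneg _
  have hpointwise := abs_sub_linearInterpolant_le hx.ne hf' hf'' fun y hy => hM.2 ⟨y, hy, rfl⟩
  have hfc : ContinuousOn f (Icc x₀ x₁) := HasDerivWithinAt.continuousOn hf'
  calc √(∫ x in x₀..x₁, (f x - linearInterpolant f x₀ x₁ x) ^ 2)
      ≤ √(∫ x in x₀..x₁, (M / 2 * ((x - x₀) * (x₁ - x))) ^ 2) :=
        Real.sqrt_le_sqrt <| integral_sq_le_integral_sq_of_abs_le hx.le
          (hfc.sub continuous_linearInterpolant.continuousOn) (by fun_prop) hpointwise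
    _ = √(M ^ 2 * (x₁ - x₀) ^ 5 / 120) := by
        simp_rw [mul_pow _ ((_ : ℝ) * _)]
        rw [intervalIntegral.integral_const_mul, integral_sq_mul_sub_mul_sub]
        ring_nf
    _ = 1 / √120 * M * (x₁ - x₀) ^ ((5 : ℝ) / 2) :=
        sqrt_sq_mul_pow_five_div_120 hM₀ (sub_nonneg.2 hx.le)

/-- L² interpolation error bound (1/√120)·M·h^{5/2}. -/
theorem linear_interpolant_error_bound
    (f f' f'' : ℝ → ℝ) (x₀ x₁ : ℝ) (hx : x₀ < x₁)
    (hf' : ∀ x ∈ Set.Icc x₀ x₁, HasDerivWithinAt f (f' x) (Set.Icc x₀ x₁) x)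
    (hf'' : ∀ x ∈ Set.Icc x₀ x₁, HasDerivWithinAt f' (f'' x) (Set.Icc x₀ x₁) x)
    (hf''c : ContinuousOn f'' (Set.Icc x₀ x₁))
    (M : ℝ) (hM : IsGreatest ((fun x => |f'' x|) '' Set.Icc x₀ x₁) M) :
    Real.sqrt (∫ x in x₀..x₁,
        (f x - (f x₀ * ((x₁ - x) / (x₁ - x₀)) + f x₁ * ((x - x₀) / (x₁ - x₀))))^2)
      ≤ (1 / Real.sqrt 120) * M * (x₁ - x₀) ^ ((5 : ℝ) / 2) :=
  linear_interpolant_error_bound_general f f' f'' x₀ x₁ hx hf' hf'' M hM
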